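/- Let Φ be an m×N complex matrix with unit-norm columns that is a tight frame with ‖Φ‖² = N/m. Let S index a linearly independent family of columns such that ‖(Φ_SᴴΦ_S)⁻¹Φ_Sᴴ‖ ≤ √2 and max_{v ∉ S} ‖Φ_Sᴴ φ_v‖₂ ≤ 1/2. Let V be a set of column indices disjoint from S and set R = S ∪ V. Then rank(Φ_R) ≥ |S| + m·|V|/(2N). -/

import Mathlib

noncomputable section

open Matrix MeasureTheory Finset

namespace SparsityGap

variable {m N : ℕ}

/-- The `j`-th column of the dictionary `Φ`. -/
def col (Φ : Matrix (Fin m) (Fin N) ℂ) (j : Fin N) : Fin m → ℂ := fun i => Φ i j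

/-- The column submatrix `Φ_S` of `Φ` with columns listed in `S`. -/
def sub (Φ : Matrix (Fin m) (Fin N) ℂ) (S : Finset (Fin N)) :
    Matrix (Fin m) {j // j ∈ S} ℂ :=
  Φ.submatrix id (fun j => (j : Fin N))

/-- `range (Φ_S)`: the span of the columns of `Φ` indexed by `S`. -/
def colSpan (Φ : Matrix (Fin m) (Fin N) ℂ) (S : Finset (Fin N)) :
    Submodule ℂ (Fin m → ℂ) :=
  Submodule.span ℂ (Set.range fun j : {j // j ∈ S} => col Φ j)

/-- `S` indexes a linearly independent family of columns of `Φ`. -/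
def LinIndepOn (Φ : Matrix (Fin m) (Fin N) ℂ) (S : Finset (Fin N)) : Prop :=
  LinearIndependent ℂ (fun j : {j // j ∈ S} => col Φ j)

/-- Each column of `Φ` has unit Euclidean norm. -/
def UnitColumns (Φ : Matrix (Fin m) (Fin N) ℂ) : Prop :=
  ∀ j, ∑ i, ‖Φ i j‖ ^ 2 = 1

/-- The coherence of `Φ` (the maximal inner product between distinct columns)
is at most `μ`. -/
def CoherenceLE (Φ : Matrix (Fin m) (Fin N) ℂ) (μ : ℝ) : Prop :=
  ∀ j k, j ≠ k → ‖∑ i, star (Φ i j) * Φ i k‖ ≤ μ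

/-- The ℓ₂ → ℓ₂ operator (spectral) norm of a matrix. -/
def opNorm {α β : Type*} [Fintype α] [Fintype β] [DecidableEq β]
    (A : Matrix α β ℂ) : ℝ :=
  ‖LinearMap.toContinuousLinearMap (Matrix.toEuclideanLin A)‖

/-- The Euclidean norm of a finitely supported vector. -/
def enorm {α : Type*} [Fintype α] (w : α → ℂ) : ℝ :=
  Real.sqrt (∑ j, ‖w j‖ ^ 2)

end SparsityGap
namespace SparsityGap

/-- The pseudoinverse `Φ_S† = (Φ_Sᴴ Φ_S)⁻¹ Φ_Sᴴ` of `Φ_S`. -/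
def pinv {m N : ℕ} (Φ : Matrix (Fin m) (Fin N) ℂ) (S : Finset (Fin N)) :
    Matrix {j // j ∈ S} (Fin m) ℂ :=
  ((sub Φ S)ᴴ * sub Φ S)⁻¹ * (sub Φ S)ᴴ

end SparsityGap

/-!
Let `Q = Φ_S Φ_S†` be the orthogonal projection onto the span of the columns indexed by `S`
and `P = 1 - Q`. Since `P Φ_S = 0`, rank–nullity for `P` on the column span of `Φ_{S ∪ V}` gives
`rank Φ_{S ∪ V} ≥ |S| + rank (P Φ_V)`. Every column of `P Φ_V` has squared norm
`1 - ‖Q φ_v‖² ≥ 1/2`, because `Q φ_v = (Φ_S†)ᴴ (Φ_Sᴴ φ_v)` has norm at most `√2 · 1/2`, while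
`‖P Φ_V‖² ≤ ‖Φ‖² = N/m`. Finally, the squared Frobenius norm of a matrix `C` is at most
`rank C · ‖C‖²`, as it is the sum of the eigenvalues of `Cᴴ C`, of which `rank C` are nonzero and
all are at most `‖C‖²`. Hence `|V|/2 ≤ rank (P Φ_V) · N/m`.
-/

open Module
open scoped Matrix.Norms.L2Operator ComplexOrder

theorem Submodule.finrank_add_finrank_map_le_finrank_sup {K V V₂ : Type*} [DivisionRing K]
    [AddCommGroup V] [Module K V] [FiniteDimensional K V] [AddCommGroup V₂] [Module K V₂]
    (f : V →ₗ[K] V₂) {A B : Submodule K V} (hA : A ≤ LinearMap.ker f) :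
    finrank K A + finrank K (B.map f) ≤ finrank K ↥(A ⊔ B) := by
  set g := f.domRestrict (A ⊔ B)
  have hker : finrank K A ≤ finrank K (LinearMap.ker g) := by
    rw [← Submodule.finrank_map_subtype_eq]
    refine Submodule.finrank_mono fun x hx => ⟨⟨x, Submodule.mem_sup_left hx⟩, ?_, rfl⟩
    simpa [g] using hA hx
  have hrange : finrank K (B.map f) ≤ finrank K (LinearMap.range g) := by
    rw [LinearMap.range_domRestrict]
    exact Submodule.finrank_mono (Submodule.map_mono le_sup_right)
  have := g.finrank_range_add_finrank_ker
  omega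

namespace Matrix

variable {𝕜 α β : Type*} [RCLike 𝕜] [Fintype α] [Fintype β]

theorem re_trace_conjTranspose_mul_self (C : Matrix α β 𝕜) :
    RCLike.re (Cᴴ * C).trace = ∑ j, ∑ i, ‖C i j‖ ^ 2 := by
  simp only [trace, diag_apply, mul_apply, conjTranspose_apply, RCLike.star_def, RCLike.conj_mul,
    map_sum, ← RCLike.ofReal_pow, RCLike.ofReal_re]

variable [DecidableEq β]

theorem IsHermitian.eigenvalues_le_l2_opNorm {A : Matrix β β 𝕜} (hA : A.IsHermitian) (i : β) :
    hA.eigenvalues i ≤ ‖A‖ := by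
  have h := A.l2_opNorm_mulVec (hA.eigenvectorBasis i)
  rw [hA.mulVec_eigenvectorBasis] at h
  simp [norm_smul, hA.eigenvectorBasis.orthonormal.1 i] at h
  exact (le_abs_self _).trans h

theorem sum_norm_sq_le_rank_mul_l2_opNorm_sq (C : Matrix α β 𝕜) :
    ∑ j, ∑ i, ‖C i j‖ ^ 2 ≤ C.rank * ‖C‖ ^ 2 := by
  set hB := isHermitian_conjTranspose_mul_self C
  have hsum : ∑ j, ∑ i, ‖C i j‖ ^ 2 = ∑ k, hB.eigenvalues k := by
    rw [← re_trace_conjTranspose_mul_self, hB.trace_eq_sum_eigenvalues]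
    simp
  have hrank : C.rank = #{k | hB.eigenvalues k ≠ 0} := by
    rw [← rank_conjTranspose_mul_self, hB.rank_eq_card_non_zero_eigs, Fintype.card_subtype]
  have hle : ∀ k, hB.eigenvalues k ≤ ‖C‖ ^ 2 := fun k => by
    simpa [l2_opNorm_conjTranspose_mul_self, sq] using hB.eigenvalues_le_l2_opNorm k
  calc ∑ j, ∑ i, ‖C i j‖ ^ 2 = ∑ k with hB.eigenvalues k ≠ 0, hB.eigenvalues k := by
        rw [hsum, sum_filter_ne_zero]
    _ ≤ ∑ k with hB.eigenvalues k ≠ 0, ‖C‖ ^ 2 := sum_le_sum fun k _ => hle k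
    _ = C.rank * ‖C‖ ^ 2 := by rw [sum_const, nsmul_eq_mul, hrank]

theorem card_mul_le_rank_mul_of_le_sum_norm_sq {t b : ℝ} (C : Matrix α β 𝕜)
    (hcols : ∀ j, t ≤ ∑ i, ‖C i j‖ ^ 2) (hC : ‖C‖ ^ 2 ≤ b) :
    Fintype.card β * t ≤ C.rank * b :=
  calc Fintype.card β * t = ∑ _j : β, t := by simp
    _ ≤ ∑ j, ∑ i, ‖C i j‖ ^ 2 := sum_le_sum fun j _ => hcols j
    _ ≤ C.rank * ‖C‖ ^ 2 := C.sum_norm_sq_le_rank_mul_l2_opNorm_sq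
    _ ≤ C.rank * b := by gcongr

theorem l2_opNorm_one_submatrix_le {γ : Type*} [Fintype γ] [DecidableEq γ] (e : γ → β)
    (he : Function.Injective e) : ‖(1 : Matrix β β 𝕜).submatrix id e‖ ≤ 1 := by
  set E := (1 : Matrix β β 𝕜).submatrix id e
  have hE : Eᴴ * E = 1 := by
    rw [conjTranspose_submatrix, conjTranspose_one, ← submatrix_mul _ _ _ _ _ Function.bijective_id]
    simpa using submatrix_one e he
  have h1 : ‖(1 : Matrix γ γ 𝕜)‖ ≤ 1 := by
    rw [← diagonal_one, l2_opNorm_diagonal]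
    exact pi_norm_le_iff_of_nonneg zero_le_one |>.mpr fun _ => by simp
  have := E.l2_opNorm_conjTranspose_mul_self
  rw [hE] at this
  nlinarith [norm_nonneg E]

theorem l2_opNorm_submatrix_id_le {γ : Type*} [Fintype γ] [DecidableEq γ]
    (A : Matrix α β 𝕜) (e : γ → β) (he : Function.Injective e) :
    ‖A.submatrix id e‖ ≤ ‖A‖ := by
  have : A.submatrix id e = A * (1 : Matrix β β 𝕜).submatrix id e := by
    simpa using (mul_submatrix_one (Equiv.refl β) e A).symm
  rw [this]
  exact A.l2_opNorm_mul _ |>.trans <|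
    mul_le_of_le_one_right (norm_nonneg A) (l2_opNorm_one_submatrix_le e he)

end Matrix

namespace SparsityGap

section Norms

variable {α β : Type*} [Fintype α] [Fintype β]

theorem opNorm_eq_l2_opNorm [DecidableEq β] (A : Matrix α β ℂ) : opNorm A = ‖A‖ := rfl

theorem enorm_eq_norm_toLp (w : α → ℂ) : enorm w = ‖WithLp.toLp 2 w‖ := by
  rw [EuclideanSpace.norm_eq]; rfl

theorem enorm_sq (w : α → ℂ) : enorm w ^ 2 = ∑ j, ‖w j‖ ^ 2 :=
  Real.sq_sqrt (sum_nonneg fun _ _ => sq_nonneg _)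

theorem enorm_mulVec_le [DecidableEq β] (A : Matrix α β ℂ) (x : β → ℂ) :
    enorm (A *ᵥ x) ≤ ‖A‖ * enorm x := by
  simpa [enorm_eq_norm_toLp] using A.l2_opNorm_mulVec (WithLp.toLp 2 x)

theorem enorm_sq_eq_add_of_isStarProjection [DecidableEq α] {Q : Matrix α α ℂ}
    (hQ : IsStarProjection Q) (x : α → ℂ) :
    enorm x ^ 2 = enorm ((1 - Q) *ᵥ x) ^ 2 + enorm (Q *ᵥ x) ^ 2 := by
  have hsplit : x = (1 - Q) *ᵥ x + Q *ᵥ x := by rw [sub_mulVec, one_mulVec, sub_add_cancel]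
  have horth : star ((1 - Q) *ᵥ x) ⬝ᵥ (Q *ᵥ x) = 0 := by
    rw [star_mulVec, ← dotProduct_mulVec, mulVec_mulVec, ← star_eq_conjTranspose,
      hQ.one_sub.isSelfAdjoint.star_eq, hQ.one_sub_mul_self, zero_mulVec, dotProduct_zero]
  simp only [enorm_eq_norm_toLp, sq]
  conv_lhs => rw [hsplit, WithLp.toLp_add]
  refine norm_add_sq_eq_norm_sq_add_norm_sq_of_inner_eq_zero (𝕜 := ℂ) _ _ ?_
  rwa [EuclideanSpace.inner_toLp_toLp, dotProduct_comm]

end Norms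

variable {m N : ℕ} (Φ : Matrix (Fin m) (Fin N) ℂ) (S : Finset (Fin N))

theorem pinv_mul_sub (hS : LinIndepOn Φ S) : pinv Φ S * sub Φ S = 1 := by
  have hG : IsUnit ((sub Φ S)ᴴ * sub Φ S) :=
    (PosDef.conjTranspose_mul_self _ (mulVec_injective_iff.mpr hS)).isUnit
  rw [pinv, Matrix.mul_assoc, nonsing_inv_mul _ ((isUnit_iff_isUnit_det _).mp hG)]

theorem one_sub_sub_mul_pinv_mul_sub (hS : LinIndepOn Φ S) :
    (1 - sub Φ S * pinv Φ S) * sub Φ S = 0 := by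
  rw [Matrix.sub_mul, Matrix.one_mul, Matrix.mul_assoc, pinv_mul_sub Φ S hS, Matrix.mul_one,
    sub_self]

theorem isStarProjection_sub_mul_pinv (hS : LinIndepOn Φ S) :
    IsStarProjection (sub Φ S * pinv Φ S) where
  isIdempotentElem := by
    rw [IsIdempotentElem, Matrix.mul_assoc, ← Matrix.mul_assoc (pinv Φ S), pinv_mul_sub Φ S hS,
      Matrix.one_mul]
  isSelfAdjoint := by
    rw [IsSelfAdjoint, star_eq_conjTranspose, pinv, conjTranspose_mul, conjTranspose_mul,
      conjTranspose_nonsing_inv, conjTranspose_mul, conjTranspose_conjTranspose, Matrix.mul_assoc]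

theorem rank_sub_eq_finrank_colSpan (T : Finset (Fin N)) :
    (sub Φ T).rank = finrank ℂ (colSpan Φ T) := by
  rw [rank, range_mulVecLin]; rfl

theorem colSpan_union (V : Finset (Fin N)) : colSpan Φ (S ∪ V) = colSpan Φ S ⊔ colSpan Φ V := by
  rw [colSpan, colSpan, colSpan, ← Submodule.span_union]
  congr 1
  ext x
  simp [or_and_right, exists_or]

theorem card_add_rank_mul_sub_le_rank_sub_union (hS : LinIndepOn Φ S)
    {P : Matrix (Fin m) (Fin m) ℂ} (hPS : P * sub Φ S = 0) (V : Finset (Fin N)) :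
    S.card + (P * sub Φ V).rank ≤ (sub Φ (S ∪ V)).rank := by
  have hker : colSpan Φ S ≤ LinearMap.ker P.mulVecLin := by
    refine Submodule.span_le.mpr ?_
    rintro _ ⟨j, rfl⟩
    exact LinearMap.mem_ker.mpr (funext fun i => congr_fun (congr_fun hPS i) j)
  have hrank : (P * sub Φ V).rank = finrank ℂ ((colSpan Φ V).map P.mulVecLin) := by
    rw [rank, mulVecLin_mul, LinearMap.range_comp, range_mulVecLin]; rfl
  have hcard : finrank ℂ (colSpan Φ S) = S.card := by
    rw [colSpan, finrank_span_eq_card hS, Fintype.card_coe]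
  rw [rank_sub_eq_finrank_colSpan, colSpan_union, hrank, ← hcard]
  exact Submodule.finrank_add_finrank_map_le_finrank_sup _ hker

theorem one_half_le_enorm_sq_one_sub_mul_col (hcol : UnitColumns Φ) (hS : LinIndepOn Φ S)
    (hpinv : ‖pinv Φ S‖ ≤ √2) {v : Fin N} (hv : enorm ((sub Φ S)ᴴ *ᵥ col Φ v) ≤ 1 / 2) :
    1 / 2 ≤ enorm ((1 - sub Φ S * pinv Φ S) *ᵥ col Φ v) ^ 2 := by
  set Q := sub Φ S * pinv Φ S
  have hQ : IsStarProjection Q := isStarProjection_sub_mul_pinv Φ S hS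
  have hQ_eq : Q = (pinv Φ S)ᴴ * (sub Φ S)ᴴ := by
    rw [← conjTranspose_mul, ← star_eq_conjTranspose, hQ.isSelfAdjoint.star_eq]
  have hQv : enorm (Q *ᵥ col Φ v) ≤ √2 * (1 / 2) :=
    calc enorm (Q *ᵥ col Φ v) = enorm ((pinv Φ S)ᴴ *ᵥ ((sub Φ S)ᴴ *ᵥ col Φ v)) := by
          rw [hQ_eq, mulVec_mulVec]
      _ ≤ ‖pinv Φ S‖ * enorm ((sub Φ S)ᴴ *ᵥ col Φ v) := by
          simpa only [l2_opNorm_conjTranspose] using enorm_mulVec_le (pinv Φ S)ᴴ _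
      _ ≤ √2 * (1 / 2) := by
          gcongr
          exact Real.sqrt_nonneg _
  have hQv_sq : enorm (Q *ᵥ col Φ v) ^ 2 ≤ 1 / 2 :=
    calc enorm (Q *ᵥ col Φ v) ^ 2 ≤ (√2 * (1 / 2)) ^ 2 := by
          gcongr
          exact Real.sqrt_nonneg _
      _ = 1 / 2 := by rw [mul_pow, Real.sq_sqrt zero_le_two]; norm_num
  have hunit : enorm (col Φ v) ^ 2 = 1 := by rw [enorm_sq]; exact hcol v
  linarith [enorm_sq_eq_add_of_isStarProjection hQ (col Φ v)]

theorem l2_opNorm_one_sub_sub_mul_pinv_mul_sub_le (hS : LinIndepOn Φ S) (V : Finset (Fin N)) :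
    ‖(1 - sub Φ S * pinv Φ S) * sub Φ V‖ ≤ ‖Φ‖ :=
  calc ‖(1 - sub Φ S * pinv Φ S) * sub Φ V‖ ≤ ‖1 - sub Φ S * pinv Φ S‖ * ‖sub Φ V‖ :=
        l2_opNorm_mul _ _
    _ ≤ 1 * ‖Φ‖ := by
        gcongr
        · exact IsStarProjection.norm_le _ (isStarProjection_sub_mul_pinv Φ S hS).one_sub
        · exact l2_opNorm_submatrix_id_le Φ _ Subtype.val_injective
    _ = ‖Φ‖ := one_mul _

theorem card_mul_one_half_le_rank_mul (hcol : UnitColumns Φ) (hS : LinIndepOn Φ S)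
    (hpinv : ‖pinv Φ S‖ ≤ √2) (hmax : ∀ v ∉ S, enorm ((sub Φ S)ᴴ *ᵥ col Φ v) ≤ 1 / 2)
    {V : Finset (Fin N)} (hSV : Disjoint S V) :
    (V.card : ℝ) * (1 / 2) ≤ ((1 - sub Φ S * pinv Φ S) * sub Φ V).rank * ‖Φ‖ ^ 2 := by
  rw [← Fintype.card_coe]
  refine card_mul_le_rank_mul_of_le_sum_norm_sq _ (fun v => ?_) ?_
  · rw [← enorm_sq]
    exact one_half_le_enorm_sq_one_sub_mul_col Φ S hcol hS hpinv
      (hmax v (disjoint_right.mp hSV v.2))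
  · gcongr
    exact l2_opNorm_one_sub_sub_mul_pinv_mul_sub_le Φ S hS V

/-- Corollary 18.  Suppose `Φ` has unit-norm columns and is
a tight frame (`‖Φ‖² = N/m`).  Let `S` index a linearly independent family of
columns with `‖Φ_S†‖ ≤ √2` and `max_{v ∉ S} ‖Φ_Sᴴ φ_v‖₂ ≤ 1/2`, and let `V`
be disjoint from `S` with `R = S ∪ V`.  Then
`rank(Φ_R) ≥ |S| + m|V|/(2N)`. -/
theorem rank_union_ge_weak_incoherence {m N : ℕ}
    (Φ : Matrix (Fin m) (Fin N) ℂ) (hcol : UnitColumns Φ)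
    (htight : opNorm Φ ^ 2 = (N : ℝ) / m)
    (S : Finset (Fin N)) (hS : LinIndepOn Φ S)
    (hpinv : opNorm (pinv Φ S) ≤ Real.sqrt 2)
    (hmax : ∀ v ∉ S, enorm ((sub Φ S)ᴴ.mulVec (col Φ v)) ≤ 1 / 2)
    (V : Finset (Fin N)) (hSV : Disjoint S V) :
    (S.card : ℝ) + (m : ℝ) * (V.card : ℝ) / (2 * N) ≤
      ((sub Φ (S ∪ V)).rank : ℝ) := by
  rw [opNorm_eq_l2_opNorm] at htight hpinv
  set C := (1 - sub Φ S * pinv Φ S) * sub Φ V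
  have hrank : (S.card : ℝ) + C.rank ≤ (sub Φ (S ∪ V)).rank := by
    exact_mod_cast card_add_rank_mul_sub_le_rank_sub_union Φ S hS
      (one_sub_sub_mul_pinv_mul_sub Φ S hS) V
  have hcard : (V.card : ℝ) * (1 / 2) ≤ C.rank * (N / m) := by
    rw [← htight]
    exact card_mul_one_half_le_rank_mul Φ S hcol hS hpinv hmax hSV
  suffices (m : ℝ) * V.card / (2 * N) ≤ C.rank by linarith
  rcases m.eq_zero_or_pos with rfl | hm
  · simp
  rcases N.eq_zero_or_pos with rfl | hN
  · simp
  field_simp at hcard ⊢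
  linarith

end SparsityGap
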